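/- arXiv:1412.8206 — 3 statements merged into one kernel-verified Lean document; each statement's English description precedes it below -/
import Mathlib

section
/- Let φ(x) = (x - γ)² + c with γ, c ∈ ℤ, and let b ∈ ℤ. If p is an odd prime dividing both φ^m(γ) and φ^n(γ) with 1 ≤ m < n, then p divides φ^{n-m}(0), and consequently p divides some iterate φ^t(γ) or φ^t(0) with 1 ≤ t ≤ ⌊n/2⌋. -/
lemma iter_congr (γ c : ℤ) (φ : ℤ → ℤ) (hφ : ∀ x, φ x = (x - γ)^2 + c)
    (d a b : ℤ) (h : d ∣ a - b) (k : ℕ) : d ∣ φ^[k] a - φ^[k] b := by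
  induction k with
  | zero => simpa using h
  | succ k ih =>
    rw [Function.iterate_succ_apply', Function.iterate_succ_apply', hφ, hφ]
    have : (φ^[k] a - γ)^2 + c - ((φ^[k] b - γ)^2 + c)
        = (φ^[k] a - φ^[k] b) * (φ^[k] a + φ^[k] b - 2*γ) := by ring
    rw [this]
    exact ih.mul_right _

theorem stmt1 (γ c : ℤ) (φ : ℤ → ℤ) (hφ : ∀ x, φ x = (x - γ)^2 + c)
    (p : ℕ) (hp : p.Prime) (hodd : Odd p)
    (m n : ℕ) (hm : 1 ≤ m) (hmn : m < n)
    (hdm : (p : ℤ) ∣ φ^[m] γ) (hdn : (p : ℤ) ∣ φ^[n] γ) :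
    (p : ℤ) ∣ φ^[n - m] 0 ∧
      ∃ t : ℕ, 1 ≤ t ∧ t ≤ n / 2 ∧ ((p : ℤ) ∣ φ^[t] γ ∨ (p : ℤ) ∣ φ^[t] 0) := by
  have key : (p : ℤ) ∣ φ^[n - m] 0 := by
    have h1 : (p : ℤ) ∣ φ^[n - m] (φ^[m] γ) - φ^[n - m] 0 :=
      iter_congr γ c φ hφ _ _ _ (by simpa using hdm) (n - m)
    have h2 : φ^[n - m] (φ^[m] γ) = φ^[n] γ := by
      rw [← Function.iterate_add_apply, Nat.sub_add_cancel hmn.le]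
    rw [h2] at h1
    have := dvd_sub hdn h1
    simpa using this
  refine ⟨key, ?_⟩
  by_cases hcase : m ≤ n / 2
  · exact ⟨m, hm, hcase, Or.inl hdm⟩
  · refine ⟨n - m, by omega, by omega, Or.inr key⟩
end

section
/- Let φ(x) = (x - γ)² + c with γ, c ∈ ℤ, and for n ≥ 1 let Δ_n denote the discriminant of the polynomial φ^n(x) (of degree 2^n). Then Δ_n = ± Δ_{n-1}² · 2^{2^n} · φ^n(γ). Consequently, every odd prime dividing Δ_n divides φ^m(γ) for some 1 ≤ m ≤ n. -/
open Polynomial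

/-- Discriminant of a monic polynomial over ℂ, via disc(f) = (-1)^{d(d-1)/2} ∏ f'(rᵢ). -/
noncomputable def discC (f : Polynomial ℂ) : ℂ :=
  (-1) ^ (f.natDegree * (f.natDegree - 1) / 2) *
    (f.roots.map fun r => (Polynomial.derivative f).eval r).prod

/-- The n-th iterate of (X - γ)² + c as a polynomial over ℂ. -/
noncomputable def iterPoly (γ c : ℤ) : ℕ → Polynomial ℂ
  | 0 => X
  | n + 1 => ((X - C (γ : ℂ)) ^ 2 + C (c : ℂ)).comp (iterPoly γ c n)

/-!
By the chain rule `(φⁿ)' = 2ⁿ ∏_{k<n} (φᵏ - γ)`. Evaluating it at the roots of `φⁿ` and swapping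
the two products of root differences, `Δ_n` becomes, up to sign, `2^{n 2ⁿ}` times the product of
`φⁿ` over the roots of the `φᵏ - γ`; at such a root `φⁿ` takes the value `φ^{n-k}(γ)`. Hence
`Δ_n = ± 2^{n 2ⁿ} ∏_{k<n} φ^{n-k}(γ)^{2^k}`, from which the recursion and the statement about odd
primes both follow at once.
-/

namespace Polynomial

section Roots

variable {R : Type*} [CommRing R] [IsDomain R]

/-- Both sides equal `∏ (α - β)` over pairs of roots of `g` and `f`, up to sign. -/
theorem prod_map_eval_roots_comm {f g : R[X]} (hf : f.Monic) (hg : g.Monic)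
    (hfs : f.Splits) (hgs : g.Splits) :
    (f.roots.map g.eval).prod = (-1) ^ (f.natDegree * g.natDegree) * (g.roots.map f.eval).prod := by
  have h := (map_sub_roots_sprod_eq_prod_map_eval f.roots g hg hgs).symm.trans
    (map_sub_sprod_roots_eq_prod_map_eval g.roots f hf hfs)
  rw [← hfs.natDegree_eq_card_roots, ← hgs.natDegree_eq_card_roots] at h
  rw [← h, ← mul_assoc, ← pow_add, ← two_mul, pow_mul, neg_one_sq, one_pow, one_mul]

end Roots

section Quadratic

variable {R : Type*} [Ring R] [Nontrivial R] (a b : R)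

theorem natDegree_X_sub_C_sq_add_C : ((X - C a) ^ 2 + C b).natDegree = 2 := by
  rw [natDegree_add_C, (monic_X_sub_C a).natDegree_pow, natDegree_X_sub_C]

theorem monic_X_sub_C_sq_add_C : ((X - C a) ^ 2 + C b).Monic :=
  ((monic_X_sub_C a).pow 2).add_of_left <| degree_C_le.trans_lt <|
    natDegree_pos_iff_degree_pos.mp <| by
      rw [(monic_X_sub_C a).natDegree_pow, natDegree_X_sub_C]; norm_num

end Quadratic

end Polynomial

theorem discC_eq_of_derivative_eq_C_mul {f g : ℂ[X]} (hf : f.Monic) (hg : g.Monic) {a : ℂ}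
    (hfg : derivative f = C a * g) :
    ∃ s : ℂ, (s = 1 ∨ s = -1) ∧
      discC f = s * a ^ f.natDegree * (g.roots.map f.eval).prod := by
  set d := f.natDegree
  refine ⟨(-1) ^ (d * (d - 1) / 2 + d * g.natDegree), neg_one_pow_eq_or ℂ _, ?_⟩
  have hroots : (f.roots.map fun r => (derivative f).eval r)
      = f.roots.map fun r => a * g.eval r := by
    simp only [hfg, eval_mul, eval_C]
  rw [discC, hroots, Multiset.prod_map_mul, Multiset.map_const', Multiset.prod_replicate,
    ← (IsAlgClosed.splits f).natDegree_eq_card_roots,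
    prod_map_eval_roots_comm hf hg (IsAlgClosed.splits f) (IsAlgClosed.splits g), pow_add]
  ring

section iterPoly

variable (γ c : ℤ)

theorem iterPoly_natDegree (n : ℕ) : (iterPoly γ c n).natDegree = 2 ^ n := by
  induction n with
  | zero => simp [iterPoly]
  | succ n ih => rw [iterPoly, natDegree_comp, natDegree_X_sub_C_sq_add_C, ih, pow_succ']

theorem iterPoly_monic (n : ℕ) : (iterPoly γ c n).Monic := by
  induction n with
  | zero => exact monic_X
  | succ n ih =>
    exact (monic_X_sub_C_sq_add_C _ _).comp ih (by rw [iterPoly_natDegree]; positivity)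

theorem iterPoly_sub_C_monic (n : ℕ) : (iterPoly γ c n - C (γ : ℂ)).Monic :=
  (iterPoly_monic γ c n).sub_of_left <| degree_C_le.trans_lt <|
    natDegree_pos_iff_degree_pos.mp (by rw [iterPoly_natDegree]; positivity)

theorem iterPoly_add (j k : ℕ) :
    iterPoly γ c (j + k) = (iterPoly γ c j).comp (iterPoly γ c k) := by
  induction j with
  | zero => simp [iterPoly]
  | succ j ih => rw [Nat.add_right_comm, iterPoly, ih, iterPoly, comp_assoc]

theorem derivative_iterPoly (n : ℕ) :
    derivative (iterPoly γ c n) =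
      C ((2 : ℂ) ^ n) * ∏ k ∈ Finset.range n, (iterPoly γ c k - C (γ : ℂ)) := by
  induction n with
  | zero => simp [iterPoly]
  | succ n ih =>
    rw [iterPoly, derivative_comp, ih, Finset.prod_range_succ, pow_succ (2 : ℂ), C_mul]
    simp only [derivative_add, derivative_C, derivative_sq, derivative_sub,
      derivative_X, add_zero, sub_zero, mul_one, mul_comp, sub_comp, X_comp, C_comp]
    ring

theorem eval_iterPoly_critical (φ : ℤ → ℤ) (hφ : ∀ x, φ x = (x - γ) ^ 2 + c) (n : ℕ) :
    (iterPoly γ c n).eval (γ : ℂ) = φ^[n] γ := by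
  induction n with
  | zero => simp [iterPoly]
  | succ n ih =>
    rw [iterPoly, eval_comp, ih, Function.iterate_succ_apply', hφ]
    simp

theorem eval_iterPoly_of_eval_eq_critical (φ : ℤ → ℤ) (hφ : ∀ x, φ x = (x - γ) ^ 2 + c)
    {k n : ℕ} (hkn : k ≤ n) {t : ℂ} (ht : (iterPoly γ c k).eval t = γ) :
    (iterPoly γ c n).eval t = φ^[n - k] γ := by
  rw [← Nat.sub_add_cancel hkn, iterPoly_add, eval_comp, ht, Nat.add_sub_cancel,
    eval_iterPoly_critical γ c φ hφ]

theorem prod_map_eval_roots_prod_iterPoly_sub_C (φ : ℤ → ℤ) (hφ : ∀ x, φ x = (x - γ) ^ 2 + c)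
    (n : ℕ) :
    ((∏ k ∈ Finset.range n, (iterPoly γ c k - C (γ : ℂ))).roots.map (iterPoly γ c n).eval).prod =
      ∏ k ∈ Finset.range n, ((φ^[n - k] γ : ℤ) : ℂ) ^ 2 ^ k := by
  rw [roots_prod _ _ (monic_prod_of_monic _ _ fun k _ => iterPoly_sub_C_monic γ c k).ne_zero,
    Multiset.map_bind, Multiset.prod_bind, Finset.prod_eq_multiset_prod]
  refine congrArg _ (Multiset.map_congr rfl fun k hk => ?_)
  have hroot : ∀ t ∈ (iterPoly γ c k - C (γ : ℂ)).roots,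
      (iterPoly γ c n).eval t = φ^[n - k] γ := fun t ht =>
    eval_iterPoly_of_eval_eq_critical γ c φ hφ (Finset.mem_range.mp hk).le <| sub_eq_zero.mp <| by
      simpa using (mem_roots (iterPoly_sub_C_monic γ c k).ne_zero).mp ht
  rw [Multiset.map_congr rfl hroot, Multiset.map_const', Multiset.prod_replicate,
    ← (IsAlgClosed.splits _).natDegree_eq_card_roots, natDegree_sub_C, iterPoly_natDegree]

end iterPoly

def iterDiscClosedForm (φ : ℤ → ℤ) (γ : ℤ) (n : ℕ) : ℤ :=
  2 ^ (n * 2 ^ n) * ∏ k ∈ Finset.range n, φ^[n - k] γ ^ 2 ^ k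

theorem discC_iterPoly (γ c : ℤ) (φ : ℤ → ℤ) (hφ : ∀ x, φ x = (x - γ) ^ 2 + c) (n : ℕ) :
    ∃ s : ℂ, (s = 1 ∨ s = -1) ∧ discC (iterPoly γ c n) = s * iterDiscClosedForm φ γ n := by
  obtain ⟨s, hs, hdisc⟩ := discC_eq_of_derivative_eq_C_mul (iterPoly_monic γ c n)
    (monic_prod_of_monic _ _ fun k _ => iterPoly_sub_C_monic γ c k) (derivative_iterPoly γ c n)
  refine ⟨s, hs, ?_⟩
  rw [hdisc, prod_map_eval_roots_prod_iterPoly_sub_C γ c φ hφ, iterPoly_natDegree,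
    iterDiscClosedForm]
  push_cast
  ring

theorem iterDiscClosedForm_succ (φ : ℤ → ℤ) (γ : ℤ) (n : ℕ) :
    iterDiscClosedForm φ γ (n + 1) =
      iterDiscClosedForm φ γ n ^ 2 * 2 ^ 2 ^ (n + 1) * φ^[n + 1] γ := by
  have hprod : ∏ k ∈ Finset.range (n + 1), φ^[n + 1 - k] γ ^ 2 ^ k =
      (∏ k ∈ Finset.range n, φ^[n - k] γ ^ 2 ^ k) ^ 2 * φ^[n + 1] γ := by
    rw [Finset.prod_range_succ', ← Finset.prod_pow]
    simp only [Nat.add_sub_add_right, pow_succ, pow_mul, pow_zero, pow_one, Nat.sub_zero]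
  rw [iterDiscClosedForm, iterDiscClosedForm, hprod]
  ring

theorem exists_dvd_iterate_of_dvd_iterDiscClosedForm {φ : ℤ → ℤ} {γ p : ℤ} {n : ℕ}
    (hp : Prime p) (hp2 : ¬ p ∣ 2) (hdvd : p ∣ iterDiscClosedForm φ γ n) :
    ∃ m : ℕ, 1 ≤ m ∧ m ≤ n ∧ p ∣ φ^[m] γ := by
  rcases hp.dvd_mul.mp hdvd with h2 | hprod
  · exact absurd (hp.dvd_of_dvd_pow h2) hp2
  · obtain ⟨k, hk, hdk⟩ := hp.exists_mem_finset_dvd hprod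
    have hkn := Finset.mem_range.mp hk
    exact ⟨n - k, by omega, by omega, hp.dvd_of_dvd_pow hdk⟩

theorem stmt11 (γ c : ℤ) (φ : ℤ → ℤ) (hφ : ∀ x, φ x = (x - γ) ^ 2 + c)
    (n : ℕ) (hn : 1 ≤ n) :
    (∃ s : ℂ, (s = 1 ∨ s = -1) ∧
      discC (iterPoly γ c n) =
        s * (discC (iterPoly γ c (n - 1))) ^ 2 * 2 ^ (2 ^ n) * ((φ^[n] γ : ℤ) : ℂ)) ∧
    ∀ p : ℕ, p.Prime → Odd p → ∀ D : ℤ, (D : ℂ) = discC (iterPoly γ c n) →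
      (p : ℤ) ∣ D → ∃ m : ℕ, 1 ≤ m ∧ m ≤ n ∧ (p : ℤ) ∣ φ^[m] γ := by
  obtain ⟨s, hs, hdisc⟩ := discC_iterPoly γ c φ hφ n
  constructor
  · obtain ⟨m, rfl⟩ := Nat.exists_eq_add_of_le' hn
    obtain ⟨s', hs', hdisc'⟩ := discC_iterPoly γ c φ hφ m
    have hs'2 : s' ^ 2 = 1 := by rcases hs' with rfl | rfl <;> norm_num
    refine ⟨s, hs, ?_⟩
    rw [hdisc, Nat.add_sub_cancel, hdisc', iterDiscClosedForm_succ, mul_pow, hs'2]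
    push_cast
    ring
  · intro p hp hodd D hD hpD
    have hDint : D = iterDiscClosedForm φ γ n ∨ D = -iterDiscClosedForm φ γ n := by
      rcases hs with rfl | rfl
      · exact Or.inl (Int.cast_injective (α := ℂ) (by simpa [hdisc] using hD))
      · exact Or.inr (Int.cast_injective (α := ℂ) (by simpa [hdisc] using hD))
    have hp2 : ¬ (p : ℤ) ∣ 2 := fun h => by
      have h2 : p = 2 := (Nat.prime_dvd_prime_iff_eq hp Nat.prime_two).mp (by exact_mod_cast h)
      exact absurd (h2 ▸ hodd) (by decide)
    refine exists_dvd_iterate_of_dvd_iterDiscClosedForm (Nat.prime_iff_prime_int.mp hp) hp2 ?_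
    rcases hDint with rfl | rfl
    · exact hpD
    · exact dvd_neg.mp hpD
end

section
/- Let φ(x) = (x - γ)² + c with γ, c ∈ ℤ, suppose n ≥ 3, and write φ^n(γ) = 2^{e} · d · y² with e ∈ {0,1}, d odd and squarefree, y ∈ ℤ. Set X = φ^{n-1}(γ) and Y = 2^{e} · d · y · (φ^{n-2}(γ) - γ). Then (X, Y) is an integral point on the curve C: Y² = 2^{e} · d · (X - c) · φ(X). -/
theorem stmt13 (γ c : ℤ) (φ : ℤ → ℤ) (hφ : ∀ x, φ x = (x - γ) ^ 2 + c)
    (n : ℕ) (hn : 3 ≤ n) (e : ℕ) (he : e ≤ 1) (d y : ℤ)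
    (hd : Odd d) (hsf : Squarefree d)
    (hfact : φ^[n] γ = 2 ^ e * d * y ^ 2)
    (X Y : ℤ) (hX : X = φ^[n - 1] γ) (hY : Y = 2 ^ e * d * y * (φ^[n - 2] γ - γ)) :
    Y ^ 2 = 2 ^ e * d * (X - c) * φ X := by
  have h1 : n = (n - 1) + 1 := by omega
  have h2 : n - 1 = (n - 2) + 1 := by omega
  have hφX : φ X = 2 ^ e * d * y ^ 2 := by
    rw [hX, ← Function.iterate_succ_apply' φ, show (n - 1).succ = n by omega, hfact]
  have hXc : X - c = (φ^[n - 2] γ - γ) ^ 2 := by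
    rw [hX, h2, Function.iterate_succ_apply' φ, hφ]; ring
  rw [hY, hXc, hφX]; ring
end
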